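/- arXiv:cs/0603078 — 7 statements merged into one kernel-verified Lean document; each statement's English description precedes it below -/
import Mathlib

section
/- For integer d > 2 and β > 0, the unique positive solution k^β of k = (1 + (d−1)k)/(1 + (1 + (d−1)k)/β) satisfies (1 − 1/(d−1))β − 1/(d−1) < k^β < β. -/
/-- d > 2: the unique positive fixed point k^β satisfies
(1 − 1/(d−1))β − 1/(d−1) < k^β < β. -/
theorem stmt_8 (d : ℕ) (hd : 2 < d) (β : ℝ) (hβ : 0 < β) (kβ : ℝ) (hk : 0 < kβ)
    (hfix : kβ = (1 + ((d : ℝ) - 1) * kβ) / (1 + (1 + ((d : ℝ) - 1) * kβ) / β)) :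
    (1 - 1 / ((d : ℝ) - 1)) * β - 1 / ((d : ℝ) - 1) < kβ ∧ kβ < β := by
  have hd3 : (3 : ℝ) ≤ (d : ℝ) := by exact_mod_cast hd
  set m : ℝ := (d : ℝ) - 1 with hm
  have hm2 : 2 ≤ m := by linarith
  have hm0 : 0 < m := by linarith
  have key : kβ * β + kβ * (1 + m * kβ) = (1 + m * kβ) * β := by
    have h := hfix
    field_simp at h
    linarith [h]
  constructor
  · have h1 : ((m - 1) * kβ + 1) * (m * kβ + 1 - (m - 1) * β) = m * kβ + 1 := by
      linear_combination (m - 1) * key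
    have hA : 0 < (m - 1) * kβ + 1 := by nlinarith
    have hB : 0 < m * kβ + 1 := by nlinarith
    have h2 : (m - 1) * β < m * kβ + 1 := by nlinarith
    have heq : (1 - 1 / m) * β - 1 / m = ((m - 1) * β - 1) / m := by
      field_simp
    rw [heq, div_lt_iff₀ hm0]
    nlinarith
  · nlinarith [mul_pos hk hβ, mul_pos hm0 (mul_pos hk hk)]
end

section
/- For integer d > 2 and β > 0, letting k^β be the unique positive solution of k = (1+(d−1)k)/(1+(1+(d−1)k)/β) and γ^β = 1/(1 + (d−1)k^β), we have 1/(1 + (d−1)β) < γ^β < 1/((d−2)β). -/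
/-- d > 2: γ^β = 1/(1+(d−1)k^β) satisfies 1/(1+(d−1)β) < γ^β < 1/((d−2)β). -/
theorem stmt_9 (d : ℕ) (hd : 2 < d) (β : ℝ) (hβ : 0 < β) (kβ : ℝ) (hk : 0 < kβ)
    (hfix : kβ = (1 + ((d : ℝ) - 1) * kβ) / (1 + (1 + ((d : ℝ) - 1) * kβ) / β)) :
    1 / (1 + ((d : ℝ) - 1) * β) < 1 / (1 + ((d : ℝ) - 1) * kβ) ∧
    1 / (1 + ((d : ℝ) - 1) * kβ) < 1 / (((d : ℝ) - 2) * β) := by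
  set D : ℝ := (d : ℝ) - 1 with hDdef
  have hD : 2 ≤ D := by
    have : (3 : ℝ) ≤ (d : ℝ) := by exact_mod_cast hd
    simp [hDdef]; linarith
  have hs : 0 < 1 + D * kβ := by nlinarith
  have hden : 0 < 1 + (1 + D * kβ) / β := by positivity
  have heq : kβ * (β + (1 + D * kβ)) = β * (1 + D * kβ) := by
    have h := hfix
    field_simp at h
    nlinarith [h]
  have h1 : 1 + D * kβ < 1 + D * β := by
    by_contra hcon
    push_neg at hcon
    have hkb : β ≤ kβ := by
      have hD0 : 0 < D := by linarith
      nlinarith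
    nlinarith [mul_nonneg (mul_nonneg (by linarith : (0:ℝ) ≤ D) hk.le) (sub_nonneg.mpr hkb)]
  have h2 : (D - 1) * β < 1 + D * kβ := by nlinarith
  constructor
  · apply one_div_lt_one_div_of_lt hs h1
  · have : ((d : ℝ) - 2) * β = (D - 1) * β := by rw [hDdef]; ring
    rw [this]
    apply one_div_lt_one_div_of_lt (by nlinarith) h2
end

section
/- Let 0 < γ < γ' ≤ 1 be real numbers. Then ∑_{s=0}^∞ |γ² (1−γ)^s − (γ')² (1−γ')^s| ≤ (γ' − γ)(1 + 4/γ). -/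
lemma pow_sub_pow_le_aux (x y : ℝ) (hy : 0 ≤ y) (hxy : y ≤ x) (n : ℕ) :
    x ^ n - y ^ n ≤ (n : ℝ) * (x - y) * x ^ (n - 1) := by
  have hx0 : 0 ≤ x := hy.trans hxy
  rw [← geom_sum₂_mul x y n]
  have hb : ∑ i ∈ Finset.range n, x ^ i * y ^ (n - 1 - i) ≤ (n : ℝ) * x ^ (n - 1) := by
    calc ∑ i ∈ Finset.range n, x ^ i * y ^ (n - 1 - i)
        ≤ ∑ _i ∈ Finset.range n, x ^ (n - 1) := by
          apply Finset.sum_le_sum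
          intro i hi
          rw [Finset.mem_range] at hi
          calc x ^ i * y ^ (n - 1 - i) ≤ x ^ i * x ^ (n - 1 - i) := by
                apply mul_le_mul_of_nonneg_left (pow_le_pow_left₀ hy hxy _) (pow_nonneg hx0 _)
            _ = x ^ (n - 1) := by
                rw [← pow_add]
                congr 1
                omega
      _ = (n : ℝ) * x ^ (n - 1) := by
          rw [Finset.sum_const, Finset.card_range, nsmul_eq_mul]
  calc (∑ i ∈ Finset.range n, x ^ i * y ^ (n - 1 - i)) * (x - y)
      ≤ ((n : ℝ) * x ^ (n - 1)) * (x - y) :=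
        mul_le_mul_of_nonneg_right hb (by linarith)
    _ = (n : ℝ) * (x - y) * x ^ (n - 1) := by ring

/-- ∑_{s=0}^∞ |γ²(1−γ)^s − (γ')²(1−γ')^s| ≤ (γ'−γ)(1 + 4/γ). -/
theorem stmt_12 (γ γ' : ℝ) (hγ : 0 < γ) (hγγ' : γ < γ') (hγ' : γ' ≤ 1) :
    ∑' s : ℕ, |γ ^ 2 * (1 - γ) ^ s - γ' ^ 2 * (1 - γ') ^ s|
      ≤ (γ' - γ) * (1 + 4 / γ) := by
  have hγ1 : γ < 1 := lt_of_lt_of_le hγγ' hγ'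
  have hγ'0 : 0 < γ' := hγ.trans hγγ'
  set x : ℝ := 1 - γ with hxdef
  set y : ℝ := 1 - γ' with hydef
  have hx0 : 0 < x := by simp only [hxdef]; linarith
  have hy0 : 0 ≤ y := by simp only [hydef]; linarith
  have hyx : y ≤ x := by simp only [hxdef, hydef]; linarith
  have hx1 : x < 1 := by simp only [hxdef]; linarith
  have hy1 : y < 1 := lt_of_le_of_lt hyx hx1
  -- majorant
  set g : ℕ → ℝ := fun n => γ ^ 2 * (γ' - γ) * ((n : ℝ) * x ^ (n - 1)) + (γ' ^ 2 - γ ^ 2) * y ^ n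
    with hgdef
  have hpt : ∀ n : ℕ, |γ ^ 2 * x ^ n - γ' ^ 2 * y ^ n| ≤ g n := by
    intro n
    have h1 : γ ^ 2 * x ^ n - γ' ^ 2 * y ^ n
        = γ ^ 2 * (x ^ n - y ^ n) - (γ' ^ 2 - γ ^ 2) * y ^ n := by ring
    rw [h1]
    have hA : 0 ≤ γ ^ 2 * (x ^ n - y ^ n) := by
      have := pow_le_pow_left₀ hy0 hyx n
      nlinarith [sq_nonneg γ]
    have hB : 0 ≤ (γ' ^ 2 - γ ^ 2) * y ^ n := by
      have h := pow_nonneg hy0 n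
      nlinarith [sq_nonneg γ, sq_nonneg γ', mul_nonneg (show (0:ℝ) ≤ γ'^2 - γ^2 by nlinarith) h]
    calc |γ ^ 2 * (x ^ n - y ^ n) - (γ' ^ 2 - γ ^ 2) * y ^ n|
        ≤ |γ ^ 2 * (x ^ n - y ^ n)| + |(γ' ^ 2 - γ ^ 2) * y ^ n| := abs_sub _ _
      _ = γ ^ 2 * (x ^ n - y ^ n) + (γ' ^ 2 - γ ^ 2) * y ^ n := by
          rw [abs_of_nonneg hA, abs_of_nonneg hB]
      _ ≤ g n := by
          have hd : x ^ n - y ^ n ≤ (n : ℝ) * (x - y) * x ^ (n - 1) :=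
            pow_sub_pow_le_aux x y hy0 hyx n
          have hxy : x - y = γ' - γ := by simp only [hxdef, hydef]; ring
          rw [hxy] at hd
          have : γ ^ 2 * (x ^ n - y ^ n) ≤ γ ^ 2 * (γ' - γ) * ((n : ℝ) * x ^ (n - 1)) := by
            nlinarith [sq_nonneg γ]
          simp only [hgdef]
          linarith
  -- summability
  have hxnorm : ‖x‖ < 1 := by rw [Real.norm_eq_abs, abs_of_pos hx0]; exact hx1
  have hs1' : Summable (fun n : ℕ => (n : ℝ) * x ^ n) := by
    simpa using summable_pow_mul_geometric_of_norm_lt_one 1 hxnorm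
  have hs1 : Summable (fun n : ℕ => (n : ℝ) * x ^ (n - 1)) := by
    have : (fun n : ℕ => (n : ℝ) * x ^ (n - 1)) = fun n : ℕ => x⁻¹ * ((n : ℝ) * x ^ n) := by
      funext n
      cases n with
      | zero => simp
      | succ m =>
        simp only [Nat.add_sub_cancel, pow_succ]
        field_simp
    rw [this]
    exact hs1'.mul_left _
  have hs2 : Summable (fun n : ℕ => y ^ n) := summable_geometric_of_lt_one hy0 hy1
  have hg_sum : Summable g := ((hs1.mul_left _).add (hs2.mul_left _))
  have hlhs_sum : Summable (fun n : ℕ => |γ ^ 2 * x ^ n - γ' ^ 2 * y ^ n|) :=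
    Summable.of_nonneg_of_le (fun n => abs_nonneg _) hpt hg_sum
  -- the tsum of the majorant
  have ht1 : ∑' n : ℕ, (n : ℝ) * x ^ (n - 1) = 1 / γ ^ 2 := by
    have e : (fun n : ℕ => (n : ℝ) * x ^ (n - 1)) = fun n : ℕ => x⁻¹ * ((n : ℝ) * x ^ n) := by
      funext n
      cases n with
      | zero => simp
      | succ m =>
        simp only [Nat.add_sub_cancel, pow_succ]
        field_simp
    rw [e, tsum_mul_left, tsum_coe_mul_geometric_of_norm_lt_one hxnorm]
    have h1x : 1 - x = γ := by simp only [hxdef]; ring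
    rw [h1x]
    field_simp
  have ht2 : ∑' n : ℕ, y ^ n = 1 / γ' := by
    rw [tsum_geometric_of_lt_one hy0 hy1]
    simp only [hydef]
    rw [show (1 : ℝ) - (1 - γ') = γ' by ring, one_div]
  have hgval : ∑' n, g n = γ ^ 2 * (γ' - γ) * (1 / γ ^ 2) + (γ' ^ 2 - γ ^ 2) * (1 / γ') := by
    simp only [hgdef]
    rw [Summable.tsum_add (hs1.mul_left _) (hs2.mul_left _), tsum_mul_left, tsum_mul_left, ht1, ht2]
  have hmain : ∑' s : ℕ, |γ ^ 2 * x ^ s - γ' ^ 2 * y ^ s| ≤ ∑' n, g n :=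
    Summable.tsum_le_tsum hpt hlhs_sum hg_sum
  rw [hgval] at hmain
  have hfinal : γ ^ 2 * (γ' - γ) * (1 / γ ^ 2) + (γ' ^ 2 - γ ^ 2) * (1 / γ')
      ≤ (γ' - γ) * (1 + 4 / γ) := by
    have e1 : γ ^ 2 * (γ' - γ) * (1 / γ ^ 2) = γ' - γ := by
      field_simp
    have e2 : (γ' ^ 2 - γ ^ 2) * (1 / γ') ≤ 2 * (γ' - γ) := by
      rw [mul_one_div, div_le_iff₀ hγ'0]
      nlinarith
    have e3 : 4 ≤ 4 / γ := by
      rw [le_div_iff₀ hγ]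
      nlinarith
    nlinarith
  exact le_trans hmain hfinal
end

section
/- Let 0 < γ < γ' ≤ 1. Define T = ⌊2(log γ' − log γ)/(log(1−γ) − log(1−γ'))⌋. Then T ≤ 2(1−γ)/γ. -/
/-! Both logarithmic differences are squeezed by the two-sided bound
`(b - a) / b ≤ log b - log a ≤ (b - a) / a` (from `log x ≤ x - 1`): the numerator
`log γ' - log γ` is at most `(γ' - γ) / γ`, the denominator `log (1 - γ) - log (1 - γ')`
is at least `(γ' - γ) / (1 - γ)`, and the factor `γ' - γ` cancels in the quotient. -/

namespace Real

theorem log_sub_log_le_sub_div {a b : ℝ} (ha : 0 < a) (hb : 0 < b) :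
    log b - log a ≤ (b - a) / a := by
  rw [← log_div hb.ne' ha.ne', sub_div, div_self ha.ne']
  exact log_le_sub_one_of_pos (div_pos hb ha)

theorem sub_div_le_log_sub_log {a b : ℝ} (ha : 0 < a) (hb : 0 < b) :
    (b - a) / b ≤ log b - log a := by
  rw [← log_div hb.ne' ha.ne', sub_div, div_self hb.ne', ← inv_div]
  exact one_sub_inv_le_log_of_pos (div_pos hb ha)

end Real

/-- The crossing index T = ⌊2(log γ' − log γ)/(log(1−γ) − log(1−γ'))⌋
satisfies T ≤ 2(1−γ)/γ. -/
theorem stmt_13 (γ γ' : ℝ) (hγ : 0 < γ) (hγγ' : γ < γ') (hγ' : γ' < 1) :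
    (⌊2 * (Real.log γ' - Real.log γ) /
        (Real.log (1 - γ) - Real.log (1 - γ'))⌋ : ℝ)
      ≤ 2 * (1 - γ) / γ := by
  have hgap : 0 < γ' - γ := sub_pos.mpr hγγ'
  have hγ₁ : 0 < 1 - γ := by linarith
  have hnum : Real.log γ' - Real.log γ ≤ (γ' - γ) / γ :=
    Real.log_sub_log_le_sub_div hγ (hγ.trans hγγ')
  have hden : (γ' - γ) / (1 - γ) ≤ Real.log (1 - γ) - Real.log (1 - γ') := by
    simpa using Real.sub_div_le_log_sub_log (by linarith : 0 < 1 - γ') hγ₁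
  calc (⌊2 * (Real.log γ' - Real.log γ) /
          (Real.log (1 - γ) - Real.log (1 - γ'))⌋ : ℝ)
      ≤ 2 * (Real.log γ' - Real.log γ) / (Real.log (1 - γ) - Real.log (1 - γ')) :=
        Int.floor_le _
    _ ≤ 2 * ((γ' - γ) / γ) / ((γ' - γ) / (1 - γ)) := by gcongr
    _ = 2 * (1 - γ) / γ := by field_simp
end

section
/- Let 0 < γ < γ' < 1 and let T be a nonnegative integer with γ²(1−γ)^s ≤ (γ')²(1−γ')^s for all s ≤ T and γ²(1−γ)^s ≥ (γ')²(1−γ')^s for all s > T. Then ∑_{s=0}^∞ |γ²(1−γ)^s − (γ')²(1−γ')^s| = γ' − γ − 2γ'(1−γ')^{T+1} + 2γ(1−γ)^{T+1}. -/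
/-!
Since `|x| = x + 2 max (-x) 0`, the series of absolute differences is the difference of the two
full series, `γ - γ'`, plus twice the (sign-definite) head `∑_{s ≤ T} ((γ')²(1-γ')^s - γ²(1-γ)^s)`;
both are geometric sums in closed form.
-/

open Finset

theorem hasSum_sq_mul_one_sub_pow {a : ℝ} (h0 : 0 < a) (h2 : a < 2) :
    HasSum (fun s : ℕ => a ^ 2 * (1 - a) ^ s) a := by
  have hgeom := (hasSum_geometric_of_abs_lt_one (r := 1 - a)
    (abs_sub_lt_iff.2 ⟨by linarith, by linarith⟩)).mul_left (a ^ 2)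
  rw [sub_sub_cancel, sq, mul_assoc, mul_inv_cancel₀ h0.ne', mul_one] at hgeom
  simpa only [sq] using hgeom

theorem sum_range_sq_mul_one_sub_pow (a : ℝ) (n : ℕ) :
    ∑ s ∈ range n, a ^ 2 * (1 - a) ^ s = a * (1 - (1 - a) ^ n) := by
  rw [← mul_sum]
  linear_combination (-a) * geom_sum_mul (1 - a) n

theorem tsum_abs_sub_of_sign_change {f g : ℕ → ℝ} (hf : Summable f) (hg : Summable g) (n : ℕ)
    (hlt : ∀ s < n, f s ≤ g s) (hge : ∀ s, n ≤ s → g s ≤ f s) :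
    ∑' s, |f s - g s| = ∑' s, (f s - g s) + 2 * ∑ s ∈ range n, (g s - f s) := by
  have hfg := hf.sub hg
  rw [← hfg.abs.sum_add_tsum_nat_add n, ← hfg.sum_add_tsum_nat_add n]
  have head : ∑ s ∈ range n, |f s - g s| = ∑ s ∈ range n, (g s - f s) :=
    sum_congr rfl fun s hs => by
      rw [abs_of_nonpos (sub_nonpos.2 (hlt s (mem_range.1 hs))), neg_sub]
  have tail : ∑' s, |f (s + n) - g (s + n)| = ∑' s, (f (s + n) - g (s + n)) :=
    tsum_congr fun s => abs_of_nonneg (sub_nonneg.2 (hge _ (Nat.le_add_left n s)))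
  rw [head, tail, sum_sub_distrib, sum_sub_distrib]
  ring

/-- Exact evaluation of the series ∑_{s=0}^∞ |γ²(1−γ)^s − (γ')²(1−γ')^s|
given a crossing index T. -/
theorem stmt_14 (γ γ' : ℝ) (hγ : 0 < γ) (hγγ' : γ < γ') (hγ' : γ' < 1)
    (T : ℕ)
    (hle : ∀ s : ℕ, s ≤ T → γ ^ 2 * (1 - γ) ^ s ≤ γ' ^ 2 * (1 - γ') ^ s)
    (hge : ∀ s : ℕ, T < s → γ' ^ 2 * (1 - γ') ^ s ≤ γ ^ 2 * (1 - γ) ^ s) :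
    ∑' s : ℕ, |γ ^ 2 * (1 - γ) ^ s - γ' ^ 2 * (1 - γ') ^ s|
      = γ' - γ - 2 * γ' * (1 - γ') ^ (T + 1) + 2 * γ * (1 - γ) ^ (T + 1) := by
  have hf := hasSum_sq_mul_one_sub_pow hγ (by linarith)
  have hg := hasSum_sq_mul_one_sub_pow (hγ.trans hγγ') (by linarith)
  rw [tsum_abs_sub_of_sign_change hf.summable hg.summable (T + 1)
      (fun s hs => hle s (Nat.lt_succ_iff.1 hs)) hge,
    (hf.sub hg).tsum_eq, sum_sub_distrib, sum_range_sq_mul_one_sub_pow,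
    sum_range_sq_mul_one_sub_pow]
  ring
end

section
/- Let P̂ be an m×m doubly stochastic matrix and let P̂⋆ = lim_{t→∞} (1/t)∑_{τ=0}^{t−1} P̂^τ (the Cesàro limit, which exists). Define τ⋆ = sup_{t≥0} ‖∑_{τ=0}^t (P̂^τ − P̂⋆)‖, where ‖·‖ is the operator norm induced by the scaled Euclidean norm ‖x‖ = ‖x‖₂/√m. Then for any γ ∈ (0,1) and any vector ŷ with ‖ŷ‖ ≤ 1, ‖∑_{τ=0}^∞ γ(1−γ)^τ P̂^τ ŷ − P̂⋆ ŷ‖ ≤ γ·τ⋆. -/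
/-!
With the weights `a τ = γ (1 - γ) ^ τ`, which sum to `1`, one has `a τ - a (τ + 1) = γ * a τ`.
Summation by parts therefore rewrites `∑ a τ • P̂^τ ŷ - P̂⋆ ŷ = ∑ a τ • (P̂^τ - P̂⋆) ŷ` as
`γ • ∑ a τ • S τ ŷ`, where `S t = ∑_{τ ≤ t} (P̂^τ - P̂⋆)` has norm at most `τ⋆`; the triangle
inequality then gives `γ τ⋆`. The scaled norm is the Euclidean norm divided by `√m`, so the
estimate is carried out in `EuclideanSpace ℝ (Fin m)`.
-/

open Filter Finset

/-- The scaled Euclidean norm ‖x‖₂/√m on ℝ^m. -/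
noncomputable def scaledNorm (m : ℕ) (x : Fin m → ℝ) : ℝ :=
  Real.sqrt ((∑ i, (x i) ^ 2) / m)

section AbelSummation

variable {E : Type*} [NormedAddCommGroup E] [NormedSpace ℝ E] [CompleteSpace E]
  {a : ℕ → ℝ} {u : ℕ → E} {C : ℝ}

lemma Summable.smul_of_norm_le (ha : Summable a) {g : ℕ → E} (hg : ∀ n, ‖g n‖ ≤ C) :
    Summable fun n => a n • g n :=
  ha.abs.mul_right C |>.of_norm_bounded fun n => by
    rw [norm_smul, Real.norm_eq_abs]
    exact mul_le_mul_of_nonneg_left (hg n) (abs_nonneg _)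

lemma Summable.smul_of_norm_sum_range_le (ha : Summable a)
    (hu : ∀ n, ‖∑ k ∈ range (n + 1), u k‖ ≤ C) : Summable fun n => a n • u n := by
  rw [← summable_nat_add_iff 1]
  have hs := ha.smul_of_norm_le hu
  have hs' := (summable_nat_add_iff 1).mpr ha |>.smul_of_norm_le hu
  refine (((summable_nat_add_iff 1).mpr hs).sub hs').congr fun n => ?_
  rw [← smul_sub, sum_range_succ_sub_sum]

lemma tsum_smul_eq_tsum_sub_smul_sum_range (ha : Summable a)
    (hu : ∀ n, ‖∑ k ∈ range (n + 1), u k‖ ≤ C) :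
    ∑' n, a n • u n = ∑' n, (a n - a (n + 1)) • ∑ k ∈ range (n + 1), u k := by
  set s := fun n => ∑ k ∈ range (n + 1), u k
  have hs : Summable fun n => a n • s n := ha.smul_of_norm_le hu
  have hs' : Summable fun n => a (n + 1) • s n :=
    (summable_nat_add_iff 1).mpr ha |>.smul_of_norm_le hu
  have hstep : ∀ n, a (n + 1) • u (n + 1) = a (n + 1) • s (n + 1) - a (n + 1) • s n :=
    fun n => by rw [← smul_sub, sum_range_succ_sub_sum]
  simp only [sub_smul]
  rw [(ha.smul_of_norm_sum_range_le hu).tsum_eq_zero_add, tsum_congr hstep,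
    ((summable_nat_add_iff 1).mpr hs).tsum_sub hs', hs.tsum_sub hs', hs.tsum_eq_zero_add,
    show s 0 = u 0 from sum_range_one u, add_sub_assoc]

lemma hasSum_geometric_weights {γ : ℝ} (hγ0 : 0 < γ) (hγ1 : γ ≤ 1) :
    HasSum (fun n => γ * (1 - γ) ^ n) 1 := by
  simpa [hγ0.ne'] using (hasSum_geometric_of_lt_one (sub_nonneg.2 hγ1) (by linarith)).mul_left γ

lemma norm_tsum_geometric_smul_le {γ : ℝ} (hγ0 : 0 < γ) (hγ1 : γ ≤ 1)
    (hu : ∀ n, ‖∑ k ∈ range (n + 1), u k‖ ≤ C) :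
    ‖∑' n, (γ * (1 - γ) ^ n) • u n‖ ≤ γ * C := by
  have hw := hasSum_geometric_weights hγ0 hγ1
  rw [tsum_smul_eq_tsum_sub_smul_sum_range hw.summable hu]
  refine tsum_of_norm_bounded (by simpa using (hw.mul_left (γ * C))) fun n => ?_
  have hdiff : γ * (1 - γ) ^ n - γ * (1 - γ) ^ (n + 1) = γ * (γ * (1 - γ) ^ n) := by ring
  have hpos : 0 ≤ γ * (γ * (1 - γ) ^ n) := by have := sub_nonneg.2 hγ1; positivity
  rw [hdiff, norm_smul, Real.norm_of_nonneg hpos]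
  calc γ * (γ * (1 - γ) ^ n) * ‖∑ k ∈ range (n + 1), u k‖ ≤ γ * (γ * (1 - γ) ^ n) * C :=
        mul_le_mul_of_nonneg_left (hu n) hpos
    _ = γ * C * (γ * (1 - γ) ^ n) := by ring

end AbelSummation

lemma scaledNorm_eq_norm_toLp_div (m : ℕ) (x : Fin m → ℝ) :
    scaledNorm m x = ‖WithLp.toLp 2 x‖ / Real.sqrt m := by
  rw [scaledNorm, EuclideanSpace.norm_eq, Real.sqrt_div (by positivity)]
  simp [Real.norm_eq_abs, sq_abs]

lemma scaledNorm_one {m : ℕ} (hm : m ≠ 0) : scaledNorm m (fun _ => 1) = 1 := by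
  simp [scaledNorm, hm]

theorem stmt_15_general (m : ℕ) (hm : 1 ≤ m)
    (P : Matrix (Fin m) (Fin m) ℝ)
    (Pstar : Matrix (Fin m) (Fin m) ℝ)
    (τstar : ℝ)
    (hτ : ∀ t : ℕ, ∀ x : Fin m → ℝ,
      scaledNorm m ((∑ τ ∈ range (t + 1), (P ^ τ - Pstar)).mulVec x)
        ≤ τstar * scaledNorm m x)
    (γ : ℝ) (hγ0 : 0 < γ) (hγ1 : γ < 1)
    (yhat : Fin m → ℝ) (hy : scaledNorm m yhat ≤ 1) :
    scaledNorm m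
      ((∑' τ : ℕ, (γ * (1 - γ) ^ τ) • (P ^ τ).mulVec yhat) - Pstar.mulVec yhat)
      ≤ γ * τstar := by
  have hsqrt : 0 < Real.sqrt m := by simp; omega
  have hτ0 : 0 ≤ τstar := by
    simpa [scaledNorm_one (by omega : m ≠ 0)] using (Real.sqrt_nonneg _).trans (hτ 0 fun _ => 1)
  set u := fun τ => WithLp.toLp 2 ((P ^ τ - Pstar).mulVec yhat)
  have hu : ∀ t, ‖∑ τ ∈ range (t + 1), u τ‖ ≤ Real.sqrt m * τstar := fun t => by
    have := (hτ t yhat).trans (mul_le_of_le_one_right hτ0 hy)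
    rwa [scaledNorm_eq_norm_toLp_div, div_le_iff₀' hsqrt, Matrix.sum_mulVec,
      WithLp.toLp_sum] at this
  set w := fun τ : ℕ => γ * (1 - γ) ^ τ
  have hw := hasSum_geometric_weights hγ0 hγ1.le
  have hsum : HasSum (fun τ => w τ • (P ^ τ).mulVec yhat)
      ((∑' τ, w τ • u τ).ofLp + Pstar.mulVec yhat) := by
    have := ((hw.summable.smul_of_norm_sum_range_le hu).hasSum.add
      (hw.smul_const (WithLp.toLp 2 (Pstar.mulVec yhat)))).mapL
      (EuclideanSpace.equiv (Fin m) ℝ).toContinuousLinearMap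
    simpa [u, w, Matrix.sub_mulVec, PiLp.coe_continuousLinearEquiv, smul_sub] using this
  rw [hsum.tsum_eq, add_sub_cancel_right, scaledNorm_eq_norm_toLp_div, div_le_iff₀ hsqrt,
    WithLp.toLp_ofLp]
  calc ‖∑' τ, w τ • u τ‖ ≤ γ * (Real.sqrt m * τstar) :=
        norm_tsum_geometric_smul_le hγ0 hγ1.le hu
    _ = γ * τstar * Real.sqrt m := by ring

/-- Lemma (eq. mubetaybar): ‖∑_τ γ(1−γ)^τ P̂^τ ŷ − P̂⋆ ŷ‖ ≤ γ·τ⋆. -/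
theorem stmt_15 (m : ℕ) (hm : 1 ≤ m)
    (P : Matrix (Fin m) (Fin m) ℝ)
    (hnonneg : ∀ i j, 0 ≤ P i j)
    (hrow : ∀ i, ∑ j, P i j = 1) (hcol : ∀ j, ∑ i, P i j = 1)
    (Pstar : Matrix (Fin m) (Fin m) ℝ)
    (hces : Tendsto (fun t : ℕ => (t : ℝ)⁻¹ • ∑ τ ∈ range t, P ^ τ)
      atTop (nhds Pstar))
    (τstar : ℝ)
    (hτ : ∀ t : ℕ, ∀ x : Fin m → ℝ,
      scaledNorm m ((∑ τ ∈ range (t + 1), (P ^ τ - Pstar)).mulVec x)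
        ≤ τstar * scaledNorm m x)
    (γ : ℝ) (hγ0 : 0 < γ) (hγ1 : γ < 1)
    (yhat : Fin m → ℝ) (hy : scaledNorm m yhat ≤ 1) :
    scaledNorm m
      ((∑' τ : ℕ, (γ * (1 - γ) ^ τ) • (P ^ τ).mulVec yhat) - Pstar.mulVec yhat)
      ≤ γ * τstar :=
  stmt_15_general m hm P Pstar τstar hτ γ hγ0 hγ1 yhat hy
end

section
/- Consider the cycle graph on n ≥ 3 nodes and let P̂ be the 2n × 2n transition matrix of the non-backtracking edge walk: directed edge {i,j} transitions with probability 1 to the unique directed edge {u,i} with u ∈ N(i)\{j}. Let P̂⋆ be its Cesàro limit. Then the Cesàro mixing time τ⋆ = sup_{t≥0} ‖∑_{τ=0}^t (P̂^τ − P̂⋆)‖ (operator norm induced by ‖x‖₂/√(2n)) satisfies τ⋆ ≤ n/√2. -/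
open Filter Finset

/-- Directed edges of the cycle on n nodes: a position together with an
orientation (clockwise / counter-clockwise). -/
abbrev CycleEdge (n : ℕ) := Fin n × Bool

/-- The non-backtracking edge walk on the cycle is deterministic: the directed
edge at position i with orientation b moves to position i±1 with the same
orientation. -/
def cycleStep (n : ℕ) [NeZero n] (e : CycleEdge n) : CycleEdge n :=
  (if e.2 then e.1 + 1 else e.1 - 1, e.2)

/-- Transition matrix of the non-backtracking edge walk on the cycle. -/
noncomputable def cycleP (n : ℕ) [NeZero n] :
    Matrix (CycleEdge n) (CycleEdge n) ℝ :=
  fun e f => if f = cycleStep n e then 1 else 0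

/-- The scaled Euclidean norm ‖x‖₂/√(2n) on ℝ^{2n}. -/
noncomputable def scaledNorm2 (n : ℕ) (x : CycleEdge n → ℝ) : ℝ :=
  Real.sqrt ((∑ e, (x e) ^ 2) / (2 * n))

/-! The edge walk is the permutation matrix of the rotation `cyclePerm`, whose `n`-th power is
the identity. Hence `P⋆` is the average of `P⁰, …, Pⁿ⁻¹`, the partial sums of `Pᵗ - P⋆` are
`n`-periodic in `t`, and for `r ≤ n`
`∑_{τ<r} (P^τ - P⋆) = (1 - r/n) ∑_{τ<r} P^τ - (r/n) ∑_{r≤τ<n} P^τ`.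
Every `P^τ` is an `ℓ²`-isometry, so this has operator norm at most `2r(n-r)/n ≤ n/2 ≤ n/√2`. -/

open Fin.NatCast
open scoped Matrix.Norms.L2Operator

namespace Function.Periodic

variable {M : Type*} [AddCommMonoid M] {f : ℕ → M} {n : ℕ}

theorem sum_range_mul_add (hf : Periodic f n) (q r : ℕ) :
    ∑ τ ∈ range (n * q + r), f τ = q • ∑ τ ∈ range n, f τ + ∑ τ ∈ range r, f τ := by
  induction q with
  | zero => simp
  | succ q ih =>
    have hshift : ∀ τ, f (n + τ) = f τ := fun τ => by rw [add_comm]; exact hf τ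
    rw [show n * (q + 1) + r = n + (n * q + r) by ring, sum_range_add]
    simp only [hshift]
    rw [ih, succ_nsmul', add_assoc]

theorem sum_range (hf : Periodic f n) (t : ℕ) :
    ∑ τ ∈ range t, f τ = (t / n) • ∑ τ ∈ range n, f τ + ∑ τ ∈ range (t % n), f τ := by
  conv_lhs => rw [← Nat.div_add_mod t n]
  exact hf.sum_range_mul_add _ _

theorem eq_average_of_tendsto_cesaro {E : Type*} [AddCommGroup E] [Module ℝ E]
    [TopologicalSpace E] [T2Space E] {f : ℕ → E} [NeZero n] (hf : Periodic f n) {L : E}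
    (hL : Tendsto (fun t : ℕ => (t : ℝ)⁻¹ • ∑ τ ∈ range t, f τ) atTop (nhds L)) :
    L = (n : ℝ)⁻¹ • ∑ τ ∈ range n, f τ := by
  have hn : (n : ℝ) ≠ 0 := Nat.cast_ne_zero.mpr (NeZero.ne n)
  have hmul : Tendsto (fun k : ℕ => n * k) atTop atTop :=
    tendsto_id.const_mul_atTop' (Nat.pos_of_ne_zero (NeZero.ne n))
  refine tendsto_nhds_unique (hL.comp hmul) (tendsto_const_nhds.congr' ?_)
  filter_upwards [eventually_ne_atTop 0] with k hk
  have hk' : (k : ℝ) ≠ 0 := Nat.cast_ne_zero.mpr hk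
  have hsum := hf.sum_range_mul_add k 0
  rw [add_zero, sum_range_zero, add_zero, ← Nat.cast_smul_eq_nsmul ℝ] at hsum
  rw [Function.comp_apply, hsum, smul_smul, Nat.cast_mul]
  congr 1
  field_simp

theorem sum_range_sub_average {E : Type*} [AddCommGroup E] [Module ℝ E] {f : ℕ → E} [NeZero n]
    (hf : Periodic f n) (t : ℕ) :
    ∑ τ ∈ range t, (f τ - (n : ℝ)⁻¹ • ∑ σ ∈ range n, f σ)
      = ∑ τ ∈ range (t % n), (f τ - (n : ℝ)⁻¹ • ∑ σ ∈ range n, f σ) := by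
  have hcentered : Periodic (fun τ => f τ - (n : ℝ)⁻¹ • ∑ σ ∈ range n, f σ) n := fun τ => by
    simp only [hf τ]
  have hperiod_sum : ∑ τ ∈ range n, (f τ - (n : ℝ)⁻¹ • ∑ σ ∈ range n, f σ) = 0 := by
    rw [sum_sub_distrib, sum_const, card_range, ← Nat.cast_smul_eq_nsmul ℝ, smul_smul,
      mul_inv_cancel₀ (NeZero.ne (n : ℝ)), one_smul, sub_self]
  rw [hcentered.sum_range, hperiod_sum, smul_zero, zero_add]

end Function.Periodic

theorem norm_sum_range_sub_average_le {E : Type*} [SeminormedAddCommGroup E] [NormedSpace ℝ E]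
    {v : ℕ → E} (hv : ∀ τ, ‖v τ‖ ≤ 1) {n r : ℕ} (hr : r ≤ n) :
    ‖∑ τ ∈ range r, (v τ - (n : ℝ)⁻¹ • ∑ σ ∈ range n, v σ)‖ ≤ n / 2 := by
  rcases Nat.eq_zero_or_pos n with rfl | hn
  · simp [Nat.le_zero.mp hr]
  set X := ∑ τ ∈ range r, v τ
  set Y := ∑ k ∈ range (n - r), v (r + k)
  have hsplit : ∑ σ ∈ range n, v σ = X + Y := by rw [← sum_range_add, Nat.add_sub_cancel' hr]
  have hX : ‖X‖ ≤ r := (norm_sum_le _ _).trans <| by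
    simpa using sum_le_sum fun τ (_ : τ ∈ range r) => hv τ
  have hY : ‖Y‖ ≤ n - r := (norm_sum_le _ _).trans <| by
    simpa [Nat.cast_sub hr] using sum_le_sum fun k (_ : k ∈ range (n - r)) => hv (r + k)
  have hn' : (0 : ℝ) < n := Nat.cast_pos.mpr hn
  set p : ℝ := r / n
  have hp0 : 0 ≤ p := by positivity
  have hp1 : p ≤ 1 := div_le_one_of_le₀ (Nat.cast_le.mpr hr) hn'.le
  have hrp : (r : ℝ) = p * n := (div_mul_cancel₀ _ hn'.ne').symm
  have hdecomp : ∑ τ ∈ range r, (v τ - (n : ℝ)⁻¹ • ∑ σ ∈ range n, v σ) = (1 - p) • X - p • Y := by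
    rw [sum_sub_distrib, sum_const, card_range, ← Nat.cast_smul_eq_nsmul ℝ, smul_smul, hsplit,
      smul_add, hrp, mul_inv_cancel_right₀ hn'.ne', sub_smul, one_smul]
    abel
  rw [hdecomp]
  calc ‖(1 - p) • X - p • Y‖
      ≤ (1 - p) * ‖X‖ + p * ‖Y‖ := by
        refine (norm_sub_le _ _).trans ?_
        rw [norm_smul, norm_smul, Real.norm_of_nonneg (sub_nonneg.mpr hp1),
          Real.norm_of_nonneg hp0]
    _ ≤ (1 - p) * r + p * (n - r) := by gcongr
    _ ≤ n / 2 := by rw [hrp]; nlinarith [mul_nonneg hn'.le (sq_nonneg (2 * p - 1))]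

theorem Matrix.permMatrix_pow {ι R : Type*} [Fintype ι] [DecidableEq ι] [Semiring R]
    (σ : Equiv.Perm ι) (k : ℕ) : (σ ^ k).permMatrix R = σ.permMatrix R ^ k := by
  induction k with
  | zero => simp
  | succ k ih => rw [pow_succ, Matrix.permMatrix_mul, ih, pow_succ']

@[simps]
def cyclePerm (n : ℕ) [NeZero n] : Equiv.Perm (CycleEdge n) where
  toFun := cycleStep n
  invFun e := (if e.2 then e.1 - 1 else e.1 + 1, e.2)
  left_inv := by rintro ⟨i, _ | _⟩ <;> simp [cycleStep]
  right_inv := by rintro ⟨i, _ | _⟩ <;> simp [cycleStep]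

theorem cyclePerm_pow_apply (n : ℕ) [NeZero n] (k : ℕ) (e : CycleEdge n) :
    (cyclePerm n ^ k) e = (if e.2 then e.1 + k else e.1 - k, e.2) := by
  induction k with
  | zero => simp
  | succ k ih =>
    rw [pow_succ', Equiv.Perm.mul_apply, ih]
    rcases e with ⟨i, _ | _⟩ <;> simp [cycleStep, add_assoc, sub_sub]

theorem cyclePerm_pow_self (n : ℕ) [NeZero n] : cyclePerm n ^ n = 1 := by
  ext1 e
  simp [cyclePerm_pow_apply]

theorem cycleP_eq_permMatrix (n : ℕ) [NeZero n] : cycleP n = (cyclePerm n).permMatrix ℝ := by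
  ext e f
  simp [cycleP, PEquiv.toMatrix_apply, eq_comm]

theorem cycleP_pow (n : ℕ) [NeZero n] (τ : ℕ) :
    cycleP n ^ τ = (cyclePerm n ^ τ).permMatrix ℝ := by
  rw [cycleP_eq_permMatrix, Matrix.permMatrix_pow]

theorem norm_cycleP_pow_le_one (n : ℕ) [NeZero n] (τ : ℕ) : ‖cycleP n ^ τ‖ ≤ 1 := by
  rw [cycleP_pow]
  exact Matrix.permMatrix_l2_opNorm_le _

theorem periodic_pow_cycleP (n : ℕ) [NeZero n] : Function.Periodic (cycleP n ^ ·) n := fun τ => by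
  simp only [pow_add, cycleP_pow n n, cyclePerm_pow_self, Matrix.permMatrix_one, mul_one]

theorem scaledNorm2_eq (n : ℕ) (x : CycleEdge n → ℝ) :
    scaledNorm2 n x = ‖WithLp.toLp 2 x‖ / Real.sqrt (2 * n) := by
  rw [scaledNorm2, EuclideanSpace.norm_eq, Real.sqrt_div' _ (by positivity)]
  simp

theorem scaledNorm2_mulVec_le (n : ℕ) (B : Matrix (CycleEdge n) (CycleEdge n) ℝ)
    (x : CycleEdge n → ℝ) : scaledNorm2 n (B.mulVec x) ≤ ‖B‖ * scaledNorm2 n x := by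
  rw [scaledNorm2_eq, scaledNorm2_eq, mul_div_assoc']
  exact div_le_div_of_nonneg_right (B.l2_opNorm_mulVec (WithLp.toLp 2 x)) (by positivity)

theorem stmt_18_general (n : ℕ) [NeZero n]
    (Pstar : Matrix (CycleEdge n) (CycleEdge n) ℝ)
    (hces : Tendsto (fun t : ℕ => (t : ℝ)⁻¹ • ∑ τ ∈ range t, cycleP n ^ τ)
      atTop (nhds Pstar)) :
    ∀ t : ℕ, ∀ x : CycleEdge n → ℝ,
      scaledNorm2 n ((∑ τ ∈ range (t + 1), (cycleP n ^ τ - Pstar)).mulVec x)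
        ≤ (n / Real.sqrt 2) * scaledNorm2 n x := by
  intro t x
  rw [(periodic_pow_cycleP n).eq_average_of_tendsto_cesaro hces,
    (periodic_pow_cycleP n).sum_range_sub_average]
  have hsqrt2 : Real.sqrt 2 ≤ 2 := by
    rw [Real.sqrt_le_left (by norm_num)]; norm_num
  calc _ ≤ ‖∑ τ ∈ range ((t + 1) % n),
          (cycleP n ^ τ - (n : ℝ)⁻¹ • ∑ σ ∈ range n, cycleP n ^ σ)‖ * scaledNorm2 n x :=
        scaledNorm2_mulVec_le n _ x
    _ ≤ n / 2 * scaledNorm2 n x := by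
        gcongr
        · exact Real.sqrt_nonneg _
        · exact norm_sum_range_sub_average_le (norm_cycleP_pow_le_one n)
            (Nat.mod_lt _ (NeZero.pos n)).le
    _ ≤ n / Real.sqrt 2 * scaledNorm2 n x := by
        gcongr
        · exact Real.sqrt_nonneg _

/-- For the cycle with n nodes, the Cesàro mixing time of the non-backtracking
edge walk satisfies τ⋆ ≤ n/√2. -/
theorem stmt_18 (n : ℕ) [NeZero n] (hn : 3 ≤ n)
    (Pstar : Matrix (CycleEdge n) (CycleEdge n) ℝ)
    (hces : Tendsto (fun t : ℕ => (t : ℝ)⁻¹ • ∑ τ ∈ range t, cycleP n ^ τ)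
      atTop (nhds Pstar)) :
    ∀ t : ℕ, ∀ x : CycleEdge n → ℝ,
      scaledNorm2 n ((∑ τ ∈ range (t + 1), (cycleP n ^ τ - Pstar)).mulVec x)
        ≤ (n / Real.sqrt 2) * scaledNorm2 n x :=
  stmt_18_general n Pstar hces
end
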